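/- arXiv:0907.0088 — 2 statements merged into one kernel-verified Lean document; each statement's English description precedes it below -/
import Mathlib

section
/- Let G be a finite vertex-weighted graph with nonnegative weights and let I be a maximum-weight independent set of G. If I is the unique maximum-weight independent set of G, then for every nonempty independent subset J of V(G) \ I, we have w(N(J) ∩ I) > w(J). -/
open Finset

/-- `S` is an independent set of `G`: no two of its vertices are adjacent. -/
def IsIndep {V : Type*} (G : SimpleGraph V) (S : Finset V) : Prop :=
  ∀ ⦃a⦄, a ∈ S → ∀ ⦃b⦄, b ∈ S → ¬ G.Adj a b

/-- total weight of a finite vertex set -/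
noncomputable def wt {V : Type*} (w : V → ℝ) (S : Finset V) : ℝ := ∑ v ∈ S, w v

/-- `p_G(I₀) = ⋃_{x∈I₀} (N(x) \ N(I₀ \ {x}))` -/
def pset {V : Type*} [DecidableEq V] [Fintype V] (G : SimpleGraph V) [DecidableRel G.Adj]
    (I0 : Finset V) : Finset V :=
  I0.biUnion fun x => G.neighborFinset x \ (I0.erase x).biUnion (fun y => G.neighborFinset y)

/-- open neighborhood of a set: `N(J) = ⋃_{x∈J} N(x)` -/
def nset {V : Type*} [DecidableEq V] [Fintype V] (G : SimpleGraph V) [DecidableRel G.Adj]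
    (J : Finset V) : Finset V :=
  J.biUnion (fun y => G.neighborFinset y)

/-! Trading the vertices of `N(J) ∩ I` for `J` turns `I` into another independent set, which is
different from `I` as `J` is nonempty and disjoint from it. By uniqueness of the maximum it is
strictly lighter: `w(I) - w(N(J) ∩ I) + w(J) < w(I)`. -/

section

variable {V : Type*} [DecidableEq V]

theorem wt_sdiff_union (w : V → ℝ) {I J : Finset V} (X : Finset V) (hJI : Disjoint J I) :
    wt w (I \ X ∪ J) = wt w I - wt w (X ∩ I) + wt w J := by
  have hdisj : Disjoint (I \ X) J := disjoint_of_subset_left sdiff_subset hJI.symm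
  rw [wt, sum_union hdisj, ← inter_comm, ← sdiff_inter_self_left, sum_sdiff_eq_sub inter_subset_left]
  rfl

variable [Fintype V] (G : SimpleGraph V) [DecidableRel G.Adj]

theorem mem_nset {J : Finset V} {v : V} : v ∈ nset G J ↔ ∃ u ∈ J, G.Adj u v := by
  simp [nset]

theorem IsIndep.sdiff_nset_union {I J : Finset V} (hI : IsIndep G I) (hJ : IsIndep G J) :
    IsIndep G (I \ nset G J ∪ J) := by
  have hcross : ∀ ⦃a⦄, a ∈ I \ nset G J → ∀ ⦃b⦄, b ∈ J → ¬ G.Adj b a := fun a ha b hb hba =>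
    (mem_sdiff.mp ha).2 ((mem_nset G).mpr ⟨b, hb, hba⟩)
  intro a ha b hb hab
  rcases mem_union.mp ha with haI | haJ <;> rcases mem_union.mp hb with hbI | hbJ
  · exact hI (mem_sdiff.mp haI).1 (mem_sdiff.mp hbI).1 hab
  · exact hcross haI hbJ hab.symm
  · exact hcross hbI haJ hab
  · exact hJ haJ hbJ hab

end

theorem stmt_8_general {V : Type*} [Fintype V] [DecidableEq V] (G : SimpleGraph V)
    [DecidableRel G.Adj] (w : V → ℝ)
    (I : Finset V) (hI : IsIndep G I)
    (hmax : ∀ S, IsIndep G S → wt w S ≤ wt w I)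
    (huniq : ∀ S, IsIndep G S → wt w S = wt w I → S = I) :
    ∀ J : Finset V, J.Nonempty → J ⊆ Finset.univ \ I → IsIndep G J →
      wt w (nset G J ∩ I) > wt w J := by
  intro J ⟨j, hj⟩ hJsub hJ
  have hJI : Disjoint J I := (subset_sdiff.mp hJsub).2
  have hS := hI.sdiff_nset_union G hJ
  have hSI : I \ nset G J ∪ J ≠ I := fun h =>
    disjoint_left.mp hJI hj (h ▸ mem_union_right _ hj)
  have hlt := (hmax _ hS).lt_of_ne (mt (huniq _ hS) hSI)
  rw [wt_sdiff_union w _ hJI] at hlt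
  linarith

theorem stmt_8 {V : Type*} [Fintype V] [DecidableEq V] (G : SimpleGraph V)
    [DecidableRel G.Adj] (w : V → ℝ) (hw : ∀ v, 0 ≤ w v)
    (I : Finset V) (hI : IsIndep G I)
    (hmax : ∀ S, IsIndep G S → wt w S ≤ wt w I)
    (huniq : ∀ S, IsIndep G S → wt w S = wt w I → S = I) :
    ∀ J : Finset V, J.Nonempty → J ⊆ Finset.univ \ I → IsIndep G J →
      wt w (nset G J ∩ I) > wt w J :=
  stmt_8_general G w I hI hmax huniq
end

section
/- Let G be a finite vertex-weighted graph with maximum independent-set weight α(G). Construct H from G by adding a set I of k+1 new vertices and a set R of 2 new vertices, all of weight 1, where every vertex of I is adjacent to every vertex of V(G) ∪ R, the two vertices of R are adjacent to each other, and there are no other new edges. Then the maximum weight of an independent set of H equals max(k, α(G)) + 1, and H has a unique maximum-weight independent set if and only if α(G) < k. -/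
open Finset

/-- `G` plus a set `I` of `k+1` new vertices and a set `R` of 2 new vertices:
every vertex of `I` is joined to every vertex of `V(G) ∪ R`, the two vertices of `R`
are joined to each other, and there are no other new edges. -/
def addIR {V : Type*} (G : SimpleGraph V) (k : ℕ) : SimpleGraph (V ⊕ (Fin (k + 1) ⊕ Fin 2)) :=
  SimpleGraph.fromRel (fun a b =>
    match a, b with
    | Sum.inl x, Sum.inl y => G.Adj x y
    | Sum.inr (Sum.inl _), Sum.inl _ => True
    | Sum.inr (Sum.inl _), Sum.inr (Sum.inr _) => True
    | Sum.inr (Sum.inr _), Sum.inr (Sum.inr _) => True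
    | _, _ => False)

/-!
An independent set of `H` that contains a vertex of `I` lies inside `I`, because `I` is joined to
every other vertex; so it weighs at most `k + 1`, and only `I` itself reaches that weight. An
independent set avoiding `I` is an independent set of `G` together with at most one of the two
adjacent vertices of `R`, so it weighs at most `α(G) + 1`; this is attained by a maximum
independent set of `G` plus either vertex of `R`, which gives two distinct optima when
`α(G) ≥ k`.
-/

section Weight

variable {α β : Type*}

lemma wt_sum_elim (w₁ : α → ℝ) (w₂ : β → ℝ) (S : Finset (α ⊕ β)) :
    wt (Sum.elim w₁ w₂) S = wt w₁ S.toLeft + wt w₂ S.toRight := by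
  conv_lhs => rw [wt, ← toLeft_disjSum_toRight (u := S)]
  rw [sum_disjSum]
  rfl

lemma wt_le_wt_of_subset {w : α → ℝ} {s t : Finset α} (hst : s ⊆ t)
    (hw : ∀ a ∈ t, 0 ≤ w a) : wt w s ≤ wt w t :=
  sum_le_sum_of_subset_of_nonneg hst fun a ha _ => hw a ha

lemma eq_of_subset_of_wt_le {w : α → ℝ} {s t : Finset α} (hst : s ⊆ t)
    (hw : ∀ a ∈ t, 0 < w a) (h : wt w t ≤ wt w s) : s = t := by
  by_contra hne
  obtain ⟨a, hat, has⟩ := exists_of_ssubset (ssubset_of_subset_of_ne hst hne)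
  have : wt w s < wt w t :=
    sum_lt_sum_of_subset hst hat has (hw a hat) fun b hb _ => (hw b hb).le
  linarith

end Weight

section addIR

variable {V : Type*} {G : SimpleGraph V} {k : ℕ}

lemma addIR_adj_inl_inl {x y : V} : (addIR G k).Adj (.inl x) (.inl y) ↔ G.Adj x y := by
  simp only [addIR, SimpleGraph.fromRel_adj, ne_eq, Sum.inl.injEq]
  exact ⟨fun h => h.2.elim id G.adj_symm, fun h => ⟨G.ne_of_adj h, .inl h⟩⟩

lemma addIR_adj_inl_I (x : V) (i : Fin (k + 1)) : (addIR G k).Adj (.inl x) (.inr (.inl i)) := by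
  simp [addIR]

lemma addIR_adj_I_R (i : Fin (k + 1)) (r : Fin 2) :
    (addIR G k).Adj (.inr (.inl i)) (.inr (.inr r)) := by
  simp [addIR]

lemma addIR_not_adj_I_I (i j : Fin (k + 1)) :
    ¬ (addIR G k).Adj (.inr (.inl i)) (.inr (.inl j)) := by
  simp [addIR]

lemma addIR_not_adj_inl_R (x : V) (r : Fin 2) : ¬ (addIR G k).Adj (.inl x) (.inr (.inr r)) := by
  simp [addIR]

lemma addIR_adj_R_R {r r' : Fin 2} :
    (addIR G k).Adj (.inr (.inr r)) (.inr (.inr r')) ↔ r ≠ r' := by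
  simp [addIR]

variable (V k) in
def addIRSetI : Finset (V ⊕ (Fin (k + 1) ⊕ Fin 2)) :=
  (∅ : Finset V).disjSum (univ.disjSum ∅)

lemma mem_addIRSetI {a : V ⊕ (Fin (k + 1) ⊕ Fin 2)} :
    a ∈ addIRSetI V k ↔ ∃ i, a = .inr (.inl i) := by
  rcases a with x | i | r <;> simp [addIRSetI]

lemma isIndep_addIRSetI : IsIndep (addIR G k) (addIRSetI V k) := by
  intro a ha b hb
  obtain ⟨i, rfl⟩ := mem_addIRSetI.1 ha
  obtain ⟨j, rfl⟩ := mem_addIRSetI.1 hb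
  exact addIR_not_adj_I_I i j

lemma wt_addIRSetI (w : V → ℝ) : wt (Sum.elim w fun _ => 1) (addIRSetI V k) = k + 1 := by
  simp [addIRSetI, wt]

lemma isIndep_disjSum_R {A : Finset V} (hA : IsIndep G A) (r : Fin 2) :
    IsIndep (addIR G k) (A.disjSum {.inr r}) := by
  intro a ha b hb hab
  rw [mem_disjSum] at ha hb
  rcases ha with ⟨x, hx, rfl⟩ | ⟨_, hr, rfl⟩ <;>
    rcases hb with ⟨y, hy, rfl⟩ | ⟨_, hr', rfl⟩
  · exact hA hx hy (addIR_adj_inl_inl.1 hab)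
  · rw [mem_singleton] at hr'; subst hr'; exact addIR_not_adj_inl_R x r hab
  · rw [mem_singleton] at hr; subst hr; exact addIR_not_adj_inl_R y r hab.symm
  · rw [mem_singleton] at hr hr'; subst hr hr'; exact addIR_adj_R_R.1 hab rfl

lemma wt_disjSum_R (w : V → ℝ) (A : Finset V) (r : Fin 2) :
    wt (Sum.elim w fun _ => 1) (A.disjSum {.inr r} : Finset (V ⊕ (Fin (k + 1) ⊕ Fin 2))) =
      wt w A + 1 := by
  simp [wt]

namespace IsIndep

variable {S : Finset (V ⊕ (Fin (k + 1) ⊕ Fin 2))}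

lemma subset_addIRSetI (hS : IsIndep (addIR G k) S) {i : Fin (k + 1)} (hi : .inr (.inl i) ∈ S) :
    S ⊆ addIRSetI V k := by
  intro a ha
  rw [mem_addIRSetI]
  rcases a with x | j | r
  · exact absurd (addIR_adj_inl_I x i) (hS ha hi)
  · exact ⟨j, rfl⟩
  · exact absurd (addIR_adj_I_R i r) (hS hi ha)

lemma toLeft (hS : IsIndep (addIR G k) S) : IsIndep G S.toLeft :=
  fun _ hx _ hy hxy => hS (mem_toLeft.1 hx) (mem_toLeft.1 hy) (addIR_adj_inl_inl.2 hxy)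

lemma card_toRight_le_one (hS : IsIndep (addIR G k) S) (hI : ∀ i, .inr (.inl i) ∉ S) :
    #S.toRight ≤ 1 := by
  rw [card_le_one]
  rintro (i | r) hi (j | r') hj
  · exact absurd (mem_toRight.1 hi) (hI i)
  · exact absurd (mem_toRight.1 hi) (hI i)
  · exact absurd (mem_toRight.1 hj) (hI j)
  · by_contra hne
    exact hS (mem_toRight.1 hi) (mem_toRight.1 hj) (addIR_adj_R_R.2 fun h => hne (h ▸ rfl))

variable {w : V → ℝ} {a : ℝ}

lemma wt_addIR_le_of_mem_I (hS : IsIndep (addIR G k) S) {i : Fin (k + 1)}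
    (hi : .inr (.inl i) ∈ S) : wt (Sum.elim w fun _ => 1) S ≤ k + 1 := by
  rw [← wt_addIRSetI w]
  refine wt_le_wt_of_subset (hS.subset_addIRSetI hi) fun b hb => ?_
  obtain ⟨j, rfl⟩ := mem_addIRSetI.1 hb
  exact zero_le_one

lemma wt_addIR_le_of_not_mem_I (hS : IsIndep (addIR G k) S) (hI : ∀ i, .inr (.inl i) ∉ S)
    (hmax : ∀ T, IsIndep G T → wt w T ≤ a) : wt (Sum.elim w fun _ => 1) S ≤ a + 1 := by
  have hR : (#S.toRight : ℝ) ≤ 1 := by exact_mod_cast hS.card_toRight_le_one hI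
  have hwR : wt (fun _ => (1 : ℝ)) S.toRight = #S.toRight := by simp [wt]
  rw [wt_sum_elim, hwR]
  linarith [hmax _ hS.toLeft]

lemma wt_addIR_le_max (hS : IsIndep (addIR G k) S) (hmax : ∀ T, IsIndep G T → wt w T ≤ a) :
    wt (Sum.elim w fun _ => 1) S ≤ max (k : ℝ) a + 1 := by
  rcases em (∃ i, .inr (.inl i) ∈ S) with ⟨i, hi⟩ | hI
  · exact (hS.wt_addIR_le_of_mem_I hi).trans (by gcongr; exact le_max_left _ _)
  · exact (hS.wt_addIR_le_of_not_mem_I (not_exists.1 hI) hmax).trans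
      (by gcongr; exact le_max_right _ _)

lemma eq_addIRSetI_of_wt_le (hS : IsIndep (addIR G k) S)
    (hmax : ∀ T, IsIndep G T → wt w T ≤ a) (ha : a < k)
    (hwS : k + 1 ≤ wt (Sum.elim w fun _ => 1) S) : S = addIRSetI V k := by
  obtain ⟨i, hi⟩ : ∃ i, .inr (.inl i) ∈ S := by
    by_contra! hI
    linarith [hS.wt_addIR_le_of_not_mem_I hI hmax]
  refine eq_of_subset_of_wt_le (hS.subset_addIRSetI hi) (fun b hb => ?_) (wt_addIRSetI w ▸ hwS)
  obtain ⟨j, rfl⟩ := mem_addIRSetI.1 hb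
  exact zero_lt_one

end IsIndep

end addIR

theorem stmt_13_general {V : Type*} (G : SimpleGraph V)
    (w : V → ℝ) (k : ℕ)
    (A : Finset V) (hA : IsIndep G A) (hAmax : ∀ T, IsIndep G T → wt w T ≤ wt w A) :
    let H := addIR G k
    let wH : V ⊕ (Fin (k + 1) ⊕ Fin 2) → ℝ := Sum.elim w (fun _ => 1)
    (∀ S : Finset (V ⊕ (Fin (k + 1) ⊕ Fin 2)), IsIndep H S → wt wH S ≤ max (k : ℝ) (wt w A) + 1) ∧
    (∃ S : Finset (V ⊕ (Fin (k + 1) ⊕ Fin 2)), IsIndep H S ∧ wt wH S = max (k : ℝ) (wt w A) + 1) ∧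
    ((∃! S : Finset (V ⊕ (Fin (k + 1) ⊕ Fin 2)),
        IsIndep H S ∧ ∀ S', IsIndep H S' → wt wH S' ≤ wt wH S) ↔ wt w A < (k : ℝ)) := by
  intro H wH
  have hbound : ∀ S, IsIndep H S → wt wH S ≤ max (k : ℝ) (wt w A) + 1 :=
    fun S hS => hS.wt_addIR_le_max hAmax
  refine ⟨hbound, ?_, ⟨?_, fun hlt => ?_⟩⟩
  · rcases le_total (k : ℝ) (wt w A) with h | h
    · exact ⟨_, isIndep_disjSum_R hA 0, by rw [wt_disjSum_R, max_eq_right h]⟩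
    · exact ⟨_, isIndep_addIRSetI, by rw [wt_addIRSetI, max_eq_left h]⟩
  · rintro ⟨S, -, huniq⟩
    by_contra! h
    have hopt (r : Fin 2) : IsIndep H (A.disjSum {.inr r}) ∧
        ∀ S', IsIndep H S' → wt wH S' ≤ wt wH (A.disjSum {.inr r}) :=
      ⟨isIndep_disjSum_R hA r, fun S' hS' =>
        (hbound S' hS').trans_eq (by rw [wt_disjSum_R, max_eq_right h])⟩
    simpa using (huniq _ (hopt 0)).trans (huniq _ (hopt 1)).symm
  · have hmax : max (k : ℝ) (wt w A) = k := max_eq_left hlt.le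
    refine ⟨addIRSetI V k, ⟨isIndep_addIRSetI, fun S' hS' => ?_⟩,
      fun S ⟨hS, hSopt⟩ => ?_⟩
    · rw [wt_addIRSetI, ← hmax]
      exact hbound S' hS'
    · exact hS.eq_addIRSetI_of_wt_le hAmax hlt (wt_addIRSetI w ▸ hSopt _ isIndep_addIRSetI)

theorem stmt_13 {V : Type*} [Fintype V] [DecidableEq V] (G : SimpleGraph V)
    [DecidableRel G.Adj] (w : V → ℝ) (hw : ∀ v, 0 ≤ w v)
    (hint : ∀ v, ∃ n : ℕ, w v = n) (k : ℕ) (hk : 1 ≤ k)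
    (A : Finset V) (hA : IsIndep G A) (hAmax : ∀ T, IsIndep G T → wt w T ≤ wt w A)
    (hApos : 0 < wt w A) :
    let H := addIR G k
    let wH : V ⊕ (Fin (k + 1) ⊕ Fin 2) → ℝ := Sum.elim w (fun _ => 1)
    (∀ S : Finset (V ⊕ (Fin (k + 1) ⊕ Fin 2)), IsIndep H S → wt wH S ≤ max (k : ℝ) (wt w A) + 1) ∧
    (∃ S : Finset (V ⊕ (Fin (k + 1) ⊕ Fin 2)), IsIndep H S ∧ wt wH S = max (k : ℝ) (wt w A) + 1) ∧
    ((∃! S : Finset (V ⊕ (Fin (k + 1) ⊕ Fin 2)),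
        IsIndep H S ∧ ∀ S', IsIndep H S' → wt wH S' ≤ wt wH S) ↔ wt w A < (k : ℝ)) :=
  stmt_13_general G w k A hA hAmax
end
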